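/- Fix real α ∈ (0,1), let K = ⌊n^α⌋, and let l = l(n) be an integer with 2 ≤ l ≤ K-1. Writing l = η·K²/n (so η ≤ n/K), one has (Ke/l)^l · ((n-K)e/(K-l))^{K-l} · (K/n)^K · ((n-K)/n)^{n-K} ≤ exp(l·(-log η + 1 + K/n)). -/

import Mathlib

/-!
After taking logarithms the claim is linear in `log k`, `log l`, `log n`, `log (n - k)` and
`log (k - l)`. It follows from `b (log a - log b) ≤ a - b` (that is, `log x ≤ x - 1`) applied to
`(a, b) = (k, k - l)`, giving `(k - l) log (k - l) ≥ (k - l) log k - l`, and to `(a, b) = (n - k, n)`,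
giving `log (n - k) ≤ log n - k / n`.
-/

open Real

lemma mul_log_sub_log_le_sub {a b : ℝ} (ha : 0 < a) (hb : 0 < b) :
    b * (log a - log b) ≤ a - b :=
  calc b * (log a - log b) = b * log (a / b) := by rw [log_div ha.ne' hb.ne']
    _ ≤ b * (a / b - 1) := by gcongr; exact log_le_sub_one_of_pos (div_pos ha hb)
    _ = a - b := by field_simp

lemma log_entropy_term_le {n k l : ℝ} (hl : 0 < l) (hlk : l < k) (hkn : k < n) :
    l * (log k + 1 - log l) + (k - l) * (log (n - k) + 1 - log (k - l))
        + k * (log k - log n) + (n - k) * (log (n - k) - log n)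
      ≤ l * (-(log l + log n - 2 * log k) + 1 + k / n) := by
  have hn : 0 < n := by linarith
  have hkl := mul_log_sub_log_le_sub (a := k) (b := k - l) (by linarith) (by linarith)
  have hnk := mul_log_sub_log_le_sub (a := n - k) (b := n) (by linarith) hn
  have hnk' : k / n ≤ log n - log (n - k) := by rw [div_le_iff₀ hn]; linarith
  have hnk_mul := mul_le_mul_of_nonneg_left hnk' (by linarith : 0 ≤ n - l)
  have hsplit : (n - l) * (k / n) + l * (k / n) = k := by field_simp; ring
  linarith

theorem entropy_term_le_exp {n k l : ℝ} (hl : 0 < l) (hlk : l < k) (hkn : k < n) :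
    (k * exp 1 / l) ^ l * ((n - k) * exp 1 / (k - l)) ^ (k - l) * (k / n) ^ k
        * ((n - k) / n) ^ (n - k)
      ≤ exp (l * (-log (l * n / k ^ 2) + 1 + k / n)) := by
  have hk : 0 < k := hl.trans hlk
  have hn : 0 < n := hk.trans hkn
  have hkl : 0 < k - l := by linarith
  have hnk : 0 < n - k := by linarith
  rw [← log_le_iff_le_exp (by positivity), log_mul (by positivity) (by positivity),
    log_mul (by positivity) (by positivity), log_mul (by positivity) (by positivity),
    log_rpow (by positivity), log_rpow (by positivity), log_rpow (by positivity),
    log_rpow (by positivity), log_div (by positivity) hl.ne', log_div (by positivity) hkl.ne',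
    log_div hk.ne' hn.ne', log_div hnk.ne' hn.ne', log_div (by positivity) (by positivity),
    log_mul hk.ne' (exp_pos 1).ne', log_mul hnk.ne' (exp_pos 1).ne', log_mul hl.ne' hn.ne',
    log_pow, log_exp]
  push_cast
  exact log_entropy_term_le hl hlk hkn

theorem entropy_term_upper_bound
    (n K l : ℕ) (hKn : K < n)
    (hl2 : 2 ≤ l) (hlK : l ≤ K - 1) :
    ((K : ℝ) * Real.exp 1 / l) ^ l *
        (((n : ℝ) - K) * Real.exp 1 / ((K : ℝ) - l)) ^ (K - l) *
        ((K : ℝ) / n) ^ K * (((n : ℝ) - K) / n) ^ (n - K)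
      ≤ Real.exp ((l : ℝ) * (-Real.log ((l : ℝ) * n / (K : ℝ) ^ 2) + 1 + (K : ℝ) / n)) := by
  have hlK' : l < K := by omega
  have h := entropy_term_le_exp (n := n) (k := K) (l := l) (Nat.cast_pos.mpr (by omega))
    (by exact_mod_cast hlK') (by exact_mod_cast hKn)
  convert h using 3 <;>
    simp only [← Real.rpow_natCast, Nat.cast_sub hlK'.le, Nat.cast_sub hKn.le]
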